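/- Let n = p^{m_1} q^{m_2}, where p and q are distinct primes with p < q and m_1, m_2 are positive integers. Then the Wiener index of the essential ideal graph E_{Z_n} equals (1/2)[m_1 m_2 (m_1 m_2 - 1) + (m_1 + m_2)(2 m_1 m_2 - 4) + 2(1 + m_1² + m_2²)]. -/

import Mathlib

open Polynomial

/-- An ideal `I` of a commutative ring is *essential* if it has nonzero intersection
with every nonzero ideal. -/
def IsEssentialIdeal {R : Type*} [CommRing R] (I : Ideal R) : Prop :=
  ∀ J : Ideal R, J ≠ ⊥ → I ⊓ J ≠ ⊥

/-- The essential ideal graph of a commutative ring `R`: its vertices are the nonzero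
proper ideals of `R`, and two distinct vertices `I`, `K` are adjacent iff `I + K` is an
essential ideal of `R`. -/
def essentialIdealGraph (R : Type*) [CommRing R] :
    SimpleGraph {I : Ideal R // I ≠ ⊥ ∧ I ≠ ⊤} where
  Adj I K := I ≠ K ∧ IsEssentialIdeal (I.1 ⊔ K.1)
  symm := by
    constructor
    rintro I K ⟨hne, hess⟩
    exact ⟨hne.symm, by rwa [sup_comm]⟩
  loopless := ⟨fun I h => h.1 rfl⟩

/-- The vertex set of the essential ideal graph of `ZMod n`. -/
abbrev EssVert (n : ℕ) : Type := {I : Ideal (ZMod n) // I ≠ ⊥ ∧ I ≠ ⊤}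

noncomputable instance (n : ℕ) [NeZero n] : Fintype (EssVert n) := by
  have : Finite (Ideal (ZMod n)) :=
    Finite.of_injective (fun I => (I : Set (ZMod n))) SetLike.coe_injective
  exact Fintype.ofFinite _

/-- The Wiener index of the essential ideal graph of `ZMod n`: the sum of the distances
between all unordered pairs of distinct vertices (i.e. half the sum over ordered pairs). -/
noncomputable def essWiener (n : ℕ) [NeZero n] : ℚ :=
  (∑ u : EssVert n, ∑ v : EssVert n,
    ((essentialIdealGraph (ZMod n)).dist u v : ℚ)) / 2

/-- The hyper-Wiener index of the essential ideal graph of `ZMod n`: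
`WW = W/2 + (1/2) Σ_{pairs} d(u,v)²`. -/
noncomputable def essHyperWiener (n : ℕ) [NeZero n] : ℚ :=
  essWiener n / 2 + (∑ u : EssVert n, ∑ v : EssVert n,
    ((essentialIdealGraph (ZMod n)).dist u v : ℚ) ^ 2) / 4


set_option linter.unusedSectionVars false
section Aux
variable {n : ℕ} [NeZero n]

lemma natCast_dvd_natCast_iff {e a : ℕ} (he : e ∣ n) :
    (e : ZMod n) ∣ (a : ZMod n) ↔ e ∣ a := by
  constructor
  · rintro ⟨c, hc⟩
    have hc' : (a : ZMod n) = ((e * c.val : ℕ) : ZMod n) := by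
      push_cast [ZMod.natCast_val, ZMod.cast_id]
      exact hc
    have hmod : a ≡ e * c.val [MOD n] := (ZMod.natCast_eq_natCast_iff _ _ _).mp hc'
    have h1 : (e : ℤ) ∣ ((e * c.val : ℕ) : ℤ) - (a : ℤ) :=
      dvd_trans (Int.natCast_dvd_natCast.mpr he) hmod.dvd
    have h2 : (e : ℤ) ∣ ((e * c.val : ℕ) : ℤ) := by
      push_cast; exact Dvd.intro _ rfl
    have h3 : (e : ℤ) ∣ (a : ℤ) := by
      have := dvd_sub h2 h1; simpa using this
    exact_mod_cast h3
  · exact fun h => Nat.cast_dvd_cast h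

lemma mem_span_natCast_iff {e a : ℕ} (he : e ∣ n) :
    (a : ZMod n) ∈ Ideal.span {(e : ZMod n)} ↔ e ∣ a := by
  rw [Ideal.mem_span_singleton, natCast_dvd_natCast_iff he]

lemma mem_span_iff {e : ℕ} (he : e ∣ n) (x : ZMod n) :
    x ∈ Ideal.span {(e : ZMod n)} ↔ e ∣ x.val := by
  conv_lhs => rw [show x = ((x.val : ℕ) : ZMod n) by rw [ZMod.natCast_val, ZMod.cast_id]]
  exact mem_span_natCast_iff he

lemma exists_span_eq (I : Ideal (ZMod n)) :
    ∃ d, d ∣ n ∧ I = Ideal.span {(d : ZMod n)} := by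
  classical
  set π : ℤ →+* ZMod n := Int.castRingHom (ZMod n)
  have hsurj : Function.Surjective π := ZMod.intCast_surjective
  set J : Ideal ℤ := I.comap π with hJ
  obtain ⟨g, hg⟩ : ∃ g : ℤ, J = Ideal.span {g} :=
    (IsPrincipalIdealRing.principal J).1.imp fun g h => by
      simpa [Ideal.submodule_span_eq] using h
  have hnJ : (n : ℤ) ∈ J := by
    simp only [hJ, Ideal.mem_comap, map_intCast, π]
    simp
  have hgn : g ∣ (n : ℤ) := Ideal.mem_span_singleton.mp (hg ▸ hnJ)
  refine ⟨g.natAbs, ?_, ?_⟩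
  · exact Int.natCast_dvd_natCast.mp ((Int.natAbs_dvd).mpr hgn)
  · have h1 : I = J.map π := (Ideal.map_comap_of_surjective π hsurj I).symm
    rw [h1, hg, Ideal.map_span]
    simp only [Set.image_singleton, π, Int.coe_castRingHom]
    have key : ((g.natAbs : ℕ) : ZMod n) = ((g.natAbs : ℤ) : ZMod n) := (Int.cast_natCast _).symm
    rw [key]
    rcases Int.natAbs_eq g with h | h
    · rw [← h]
    · have h2 : ((g.natAbs : ℤ) : ZMod n) = -((g : ℤ) : ZMod n) := by
        rw [show ((g.natAbs : ℤ)) = -g from by omega]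
        push_cast; ring
      rw [h2, Ideal.span_singleton_neg]

lemma span_eq_bot_iff {d : ℕ} (hd : d ∣ n) :
    Ideal.span {(d : ZMod n)} = ⊥ ↔ d = n := by
  rw [Ideal.span_singleton_eq_bot, ZMod.natCast_eq_zero_iff]
  exact ⟨fun h => Nat.dvd_antisymm hd h, fun h => h ▸ dvd_rfl⟩

lemma span_eq_top_iff {d : ℕ} (hd : d ∣ n) :
    Ideal.span {(d : ZMod n)} = ⊤ ↔ d = 1 := by
  constructor
  · intro h
    have h1 : (1 : ZMod n) ∈ Ideal.span {(d : ZMod n)} := h ▸ trivial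
    have := (mem_span_natCast_iff (a := 1) hd).mp (by exact_mod_cast h1)
    exact Nat.dvd_one.mp this
  · rintro rfl
    simp [Ideal.span_singleton_eq_top]

lemma span_inj {d e : ℕ} (hd : d ∣ n) (he : e ∣ n)
    (h : Ideal.span {(d : ZMod n)} = Ideal.span {(e : ZMod n)}) : d = e := by
  have h1 : e ∣ d := (mem_span_natCast_iff he).mp (h ▸ Ideal.subset_span rfl)
  have h2 : d ∣ e := (mem_span_natCast_iff hd).mp (h ▸ Ideal.subset_span rfl)
  exact Nat.dvd_antisymm h2 h1

lemma span_sup_span (d e : ℕ) :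
    Ideal.span {(d : ZMod n)} ⊔ Ideal.span {(e : ZMod n)} =
      Ideal.span {(Nat.gcd d e : ZMod n)} := by
  rw [← Ideal.span_insert]
  apply le_antisymm
  · rw [Ideal.span_le]
    rintro x (rfl | rfl)
    · exact Ideal.mem_span_singleton.mpr (Nat.cast_dvd_cast (Nat.gcd_dvd_left d e))
    · exact Ideal.mem_span_singleton.mpr (Nat.cast_dvd_cast (Nat.gcd_dvd_right d e))
  · rw [Ideal.span_le, Set.singleton_subset_iff]
    rw [SetLike.mem_coe, Ideal.mem_span_pair]
    refine ⟨((Nat.gcdA d e : ℤ) : ZMod n), ((Nat.gcdB d e : ℤ) : ZMod n), ?_⟩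
    have := Nat.gcd_eq_gcd_ab d e
    have h2 : ((Nat.gcd d e : ℤ) : ZMod n) = (Nat.gcd d e : ZMod n) := by push_cast; rfl
    rw [← h2, this]
    push_cast
    ring

end Aux

lemma pow_dvd_lcm {r k a b : ℕ} (hr : r.Prime) (ha : a ≠ 0) (hb : b ≠ 0)
    (h : r ^ k ∣ Nat.lcm a b) : r ^ k ∣ a ∨ r ^ k ∣ b := by
  have hlcm : Nat.lcm a b ≠ 0 := Nat.lcm_ne_zero ha hb
  rw [hr.pow_dvd_iff_le_factorization hlcm, Nat.factorization_lcm ha hb,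
    Finsupp.sup_apply, le_sup_iff] at h
  rcases h with h | h
  · exact Or.inl ((hr.pow_dvd_iff_le_factorization ha).mpr h)
  · exact Or.inr ((hr.pow_dvd_iff_le_factorization hb).mpr h)

/-- The vertex set as divisors. -/
def Dn (n : ℕ) : Finset ℕ := (n.divisors.erase 1).erase n

lemma mem_Dn {n d : ℕ} (hn0 : n ≠ 0) : d ∈ Dn n ↔ d ∣ n ∧ d ≠ 1 ∧ d ≠ n := by
  simp only [Dn, Finset.mem_erase, Nat.mem_divisors]
  tauto

section Main
variable {n : ℕ} [NeZero n]

noncomputable def vertEquiv (n : ℕ) [NeZero n] : {d // d ∈ Dn n} ≃ EssVert n := by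
  have hn0 : n ≠ 0 := NeZero.ne n
  refine Equiv.ofBijective (fun d =>
    ⟨Ideal.span {((d : ℕ) : ZMod n)}, ?_, ?_⟩) ⟨?_, ?_⟩
  · have := (mem_Dn hn0).mp d.2
    exact fun h => this.2.2 ((span_eq_bot_iff this.1).mp h)
  · have := (mem_Dn hn0).mp d.2
    exact fun h => this.2.1 ((span_eq_top_iff this.1).mp h)
  · rintro ⟨d, hd⟩ ⟨e, he⟩ h
    have hd' := (mem_Dn hn0).mp hd
    have he' := (mem_Dn hn0).mp he
    have := span_inj hd'.1 he'.1 (congrArg Subtype.val h)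
    exact Subtype.ext this
  · rintro ⟨I, hIbot, hItop⟩
    obtain ⟨d, hd, rfl⟩ := exists_span_eq I
    have h1 : d ≠ n := fun h => hIbot ((span_eq_bot_iff hd).mpr h)
    have h2 : d ≠ 1 := fun h => hItop ((span_eq_top_iff hd).mpr h)
    exact ⟨⟨d, (mem_Dn hn0).mpr ⟨hd, h2, h1⟩⟩, rfl⟩

lemma vertEquiv_ne_iff {d e : ℕ} (hd : d ∈ Dn n) (he : e ∈ Dn n) :
    vertEquiv n ⟨d, hd⟩ ≠ vertEquiv n ⟨e, he⟩ ↔ d ≠ e := by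
  constructor
  · exact fun h hde => h (by subst hde; rfl)
  · intro hde h
    exact hde (congrArg Subtype.val ((vertEquiv n).injective h))

variable {p q m₁ m₂ : ℕ}

lemma essential_iff (hp : p.Prime) (hq : q.Prime) (hne : p ≠ q)
    (hm₁ : 0 < m₁) (hm₂ : 0 < m₂) (hn : n = p ^ m₁ * q ^ m₂) {d : ℕ} (hd : d ∣ n) :
    IsEssentialIdeal (Ideal.span {(d : ZMod n)}) ↔ ¬(p ^ m₁ ∣ d) ∧ ¬(q ^ m₂ ∣ d) := by
  have hn0 : n ≠ 0 := NeZero.ne n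
  have hpn : p ^ m₁ ∣ n := hn ▸ dvd_mul_right _ _
  have hqn : q ^ m₂ ∣ n := hn ▸ dvd_mul_left _ _
  have cop : (p ^ m₁).Coprime (q ^ m₂) :=
    Nat.Coprime.pow _ _ ((Nat.coprime_primes hp hq).mpr hne)
  have copP : Nat.Coprime p (q ^ m₂) :=
    (((Nat.coprime_primes hp hq).mpr hne).pow_right m₂)
  have copQ : Nat.Coprime q (p ^ m₁) :=
    (((Nat.coprime_primes hq hp).mpr hne.symm).pow_right m₁)
  constructor
  · intro hess
    have key : ∀ (c : ℕ), c ∣ n → c ≠ n → Nat.Coprime c d →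
        False → True := fun _ _ _ _ h => h.elim
    constructor
    · intro hPd
      have hJne : Ideal.span {((q ^ m₂ : ℕ) : ZMod n)} ≠ ⊥ := by
        rw [Ne, span_eq_bot_iff hqn]
        intro h
        have hpd : p ∣ q ^ m₂ := h ▸ (dvd_pow_self p hm₁.ne').trans hpn
        exact hp.one_lt.ne' (copP.eq_one_of_dvd hpd)
      refine hess _ hJne ?_
      rw [eq_bot_iff]
      intro x hx
      obtain ⟨h1, h2⟩ := Submodule.mem_inf.mp hx
      rw [mem_span_iff hd] at h1
      rw [mem_span_iff hqn] at h2
      have h3 : n ∣ x.val := (dvd_of_eq hn).trans (cop.mul_dvd_of_dvd_of_dvd (hPd.trans h1) h2)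
      have h4 : ((x.val : ℕ) : ZMod n) = 0 := (ZMod.natCast_eq_zero_iff _ _).mpr h3
      rw [ZMod.natCast_val, ZMod.cast_id] at h4
      simpa [Submodule.mem_bot] using h4
    · intro hQd
      have hJne : Ideal.span {((p ^ m₁ : ℕ) : ZMod n)} ≠ ⊥ := by
        rw [Ne, span_eq_bot_iff hpn]
        intro h
        have hqd : q ∣ p ^ m₁ := h ▸ (dvd_pow_self q hm₂.ne').trans hqn
        exact hq.one_lt.ne' (copQ.eq_one_of_dvd hqd)
      refine hess _ hJne ?_
      rw [eq_bot_iff]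
      intro x hx
      obtain ⟨h1, h2⟩ := Submodule.mem_inf.mp hx
      rw [mem_span_iff hd] at h1
      rw [mem_span_iff hpn] at h2
      have h3 : n ∣ x.val := (dvd_of_eq hn).trans (cop.mul_dvd_of_dvd_of_dvd h2 (hQd.trans h1))
      have h4 : ((x.val : ℕ) : ZMod n) = 0 := (ZMod.natCast_eq_zero_iff _ _).mpr h3
      rw [ZMod.natCast_val, ZMod.cast_id] at h4
      simpa [Submodule.mem_bot] using h4
  · rintro ⟨hPd, hQd⟩ J hJ
    obtain ⟨e, he, rfl⟩ := exists_span_eq J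
    have hen : e ≠ n := fun h => hJ ((span_eq_bot_iff he).mpr h)
    have hd0 : d ≠ 0 := fun h => hn0 (Nat.eq_zero_of_zero_dvd (h ▸ hd))
    have he0 : e ≠ 0 := fun h => hn0 (Nat.eq_zero_of_zero_dvd (h ▸ he))
    have hLn : Nat.lcm d e ∣ n := Nat.lcm_dvd hd he
    have hnL : ¬ n ∣ Nat.lcm d e := by
      intro h
      have h1 : p ^ m₁ ∣ e := (pow_dvd_lcm hp hd0 he0 (hpn.trans h)).resolve_left hPd
      have h2 : q ^ m₂ ∣ e := (pow_dvd_lcm hq hd0 he0 (hqn.trans h)).resolve_left hQd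
      have h3 : n ∣ e := (dvd_of_eq hn).trans (cop.mul_dvd_of_dvd_of_dvd h1 h2)
      exact hen (Nat.dvd_antisymm he h3)
    intro hbot
    have hmem : ((Nat.lcm d e : ℕ) : ZMod n) ∈
        Ideal.span {(d : ZMod n)} ⊓ Ideal.span {(e : ZMod n)} :=
      Submodule.mem_inf.mpr ⟨(mem_span_natCast_iff hd).mpr (Nat.dvd_lcm_left d e),
        (mem_span_natCast_iff he).mpr (Nat.dvd_lcm_right d e)⟩
    rw [hbot, Submodule.mem_bot] at hmem
    exact hnL ((ZMod.natCast_eq_zero_iff _ _).mp hmem)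

lemma adj_iff (hp : p.Prime) (hq : q.Prime) (hne : p ≠ q)
    (hm₁ : 0 < m₁) (hm₂ : 0 < m₂) (hn : n = p ^ m₁ * q ^ m₂)
    {d e : ℕ} (hd : d ∈ Dn n) (he : e ∈ Dn n) :
    (essentialIdealGraph (ZMod n)).Adj (vertEquiv n ⟨d, hd⟩) (vertEquiv n ⟨e, he⟩) ↔
      d ≠ e ∧ ¬(p ^ m₁ ∣ d ∧ p ^ m₁ ∣ e) ∧ ¬(q ^ m₂ ∣ d ∧ q ^ m₂ ∣ e) := by
  have hn0 : n ≠ 0 := NeZero.ne n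
  have hd' := (mem_Dn hn0).mp hd
  have he' := (mem_Dn hn0).mp he
  have hgcd : Nat.gcd d e ∣ n := (Nat.gcd_dvd_left d e).trans hd'.1
  show (_ ≠ _ ∧ IsEssentialIdeal (R := ZMod n) _) ↔ _
  rw [vertEquiv_ne_iff hd he]
  have hsup : (vertEquiv n ⟨d, hd⟩).1 ⊔ (vertEquiv n ⟨e, he⟩).1 =
      Ideal.span {((Nat.gcd d e : ℕ) : ZMod n)} := span_sup_span d e
  rw [hsup, essential_iff hp hq hne hm₁ hm₂ hn hgcd, Nat.dvd_gcd_iff, Nat.dvd_gcd_iff]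

lemma p_mem_Dn (hp : p.Prime) (hq : q.Prime) (hne : p ≠ q)
    (hm₁ : 0 < m₁) (hm₂ : 0 < m₂) (hn : n = p ^ m₁ * q ^ m₂) : p ∈ Dn n := by
  have hn0 : n ≠ 0 := NeZero.ne n
  have hpdvd : p ∣ n := (dvd_pow_self p hm₁.ne').trans (hn ▸ dvd_mul_right _ _)
  have hqdvd : q ∣ n := (dvd_pow_self q hm₂.ne').trans (hn ▸ dvd_mul_left _ _)
  refine (mem_Dn hn0).mpr ⟨hpdvd, hp.one_lt.ne', fun h => ?_⟩
  exact hne ((Nat.prime_dvd_prime_iff_eq hq hp).mp (h ▸ hqdvd)).symm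

lemma q_mem_Dn (hp : p.Prime) (hq : q.Prime) (hne : p ≠ q)
    (hm₁ : 0 < m₁) (hm₂ : 0 < m₂) (hn : n = p ^ m₁ * q ^ m₂) : q ∈ Dn n := by
  have hn0 : n ≠ 0 := NeZero.ne n
  have hpdvd : p ∣ n := (dvd_pow_self p hm₁.ne').trans (hn ▸ dvd_mul_right _ _)
  have hqdvd : q ∣ n := (dvd_pow_self q hm₂.ne').trans (hn ▸ dvd_mul_left _ _)
  refine (mem_Dn hn0).mpr ⟨hqdvd, hq.one_lt.ne', fun h => ?_⟩
  exact hne ((Nat.prime_dvd_prime_iff_eq hp hq).mp (h ▸ hpdvd))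

lemma dist_eq (hp : p.Prime) (hq : q.Prime) (hne : p ≠ q)
    (hm₁ : 0 < m₁) (hm₂ : 0 < m₂) (hn : n = p ^ m₁ * q ^ m₂)
    {d e : ℕ} (hd : d ∈ Dn n) (he : e ∈ Dn n) :
    (((essentialIdealGraph (ZMod n)).dist (vertEquiv n ⟨d, hd⟩) (vertEquiv n ⟨e, he⟩) : ℕ) : ℚ) =
      2 - (if d = e then 2 else 0) -
        (if d ≠ e ∧ ¬(p ^ m₁ ∣ d ∧ p ^ m₁ ∣ e) ∧ ¬(q ^ m₂ ∣ d ∧ q ^ m₂ ∣ e) then 1 else 0) := by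
  have hn0 : n ≠ 0 := NeZero.ne n
  have cop : (p ^ m₁).Coprime (q ^ m₂) :=
    Nat.Coprime.pow _ _ ((Nat.coprime_primes hp hq).mpr hne)
  have hd' := (mem_Dn hn0).mp hd
  have he' := (mem_Dn hn0).mp he
  -- exclusivity
  have excl : ∀ c : ℕ, c ∈ Dn n → ¬(p ^ m₁ ∣ c ∧ q ^ m₂ ∣ c) := by
    rintro c hc ⟨h1, h2⟩
    have hc' := (mem_Dn hn0).mp hc
    have : n ∣ c := (dvd_of_eq hn).trans (cop.mul_dvd_of_dvd_of_dvd h1 h2)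
    exact hc'.2.2 (Nat.dvd_antisymm hc'.1 this)
  by_cases hde : d = e
  · subst hde
    rw [SimpleGraph.dist_self]
    simp
  · by_cases hadj : ¬(p ^ m₁ ∣ d ∧ p ^ m₁ ∣ e) ∧ ¬(q ^ m₂ ∣ d ∧ q ^ m₂ ∣ e)
    · have hA : (essentialIdealGraph (ZMod n)).Adj (vertEquiv n ⟨d, hd⟩) (vertEquiv n ⟨e, he⟩) :=
        (adj_iff hp hq hne hm₁ hm₂ hn hd he).mpr ⟨hde, hadj.1, hadj.2⟩
      rw [SimpleGraph.dist_eq_one_iff_adj.mpr hA]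
      simp [hde, hadj.1, hadj.2]
      norm_num
    · have hcase : (p ^ m₁ ∣ d ∧ p ^ m₁ ∣ e) ∨ (q ^ m₂ ∣ d ∧ q ^ m₂ ∣ e) := by tauto
      -- common neighbor w
      obtain ⟨w, hw, a1, a2⟩ : ∃ w, ∃ hw : w ∈ Dn n,
          (essentialIdealGraph (ZMod n)).Adj (vertEquiv n ⟨d, hd⟩) (vertEquiv n ⟨w, hw⟩) ∧
          (essentialIdealGraph (ZMod n)).Adj (vertEquiv n ⟨w, hw⟩) (vertEquiv n ⟨e, he⟩) := by
        rcases hcase with ⟨hPd, hPe⟩ | ⟨hQd, hQe⟩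
        · refine ⟨q, q_mem_Dn hp hq hne hm₁ hm₂ hn, ?_, ?_⟩ <;>
            rw [adj_iff hp hq hne hm₁ hm₂ hn]
          · refine ⟨?_, ?_, ?_⟩
            · rintro rfl
              exact hne ((Nat.prime_dvd_prime_iff_eq hp hq).mp
                ((dvd_pow_self p hm₁.ne').trans hPd))
            · rintro ⟨-, hq2⟩
              exact hne ((Nat.prime_dvd_prime_iff_eq hp hq).mp
                ((dvd_pow_self p hm₁.ne').trans hq2))
            · rintro ⟨hq1, -⟩
              exact excl d hd ⟨hPd, hq1⟩
          · refine ⟨?_, ?_, ?_⟩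
            · rintro rfl
              exact hne ((Nat.prime_dvd_prime_iff_eq hp hq).mp
                ((dvd_pow_self p hm₁.ne').trans hPe))
            · rintro ⟨hq2, -⟩
              exact hne ((Nat.prime_dvd_prime_iff_eq hp hq).mp
                ((dvd_pow_self p hm₁.ne').trans hq2))
            · rintro ⟨-, hq1⟩
              exact excl e he ⟨hPe, hq1⟩
        · refine ⟨p, p_mem_Dn hp hq hne hm₁ hm₂ hn, ?_, ?_⟩ <;>
            rw [adj_iff hp hq hne hm₁ hm₂ hn]
          · refine ⟨?_, ?_, ?_⟩
            · rintro rfl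
              exact hne ((Nat.prime_dvd_prime_iff_eq hq hp).mp
                ((dvd_pow_self q hm₂.ne').trans hQd)).symm
            · rintro ⟨hq1, -⟩
              exact excl d hd ⟨hq1, hQd⟩
            · rintro ⟨-, hq2⟩
              exact hne ((Nat.prime_dvd_prime_iff_eq hq hp).mp
                ((dvd_pow_self q hm₂.ne').trans hq2)).symm
          · refine ⟨?_, ?_, ?_⟩
            · rintro rfl
              exact hne ((Nat.prime_dvd_prime_iff_eq hq hp).mp
                ((dvd_pow_self q hm₂.ne').trans hQe)).symm
            · rintro ⟨-, hq1⟩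
              exact excl e he ⟨hq1, hQe⟩
            · rintro ⟨hq2, -⟩
              exact hne ((Nat.prime_dvd_prime_iff_eq hq hp).mp
                ((dvd_pow_self q hm₂.ne').trans hq2)).symm
      have hle2 : (essentialIdealGraph (ZMod n)).dist
          (vertEquiv n ⟨d, hd⟩) (vertEquiv n ⟨e, he⟩) ≤ 2 := by
        have := SimpleGraph.dist_le (SimpleGraph.Walk.cons a1 a2.toWalk)
        simpa using this
      have hner : vertEquiv n ⟨d, hd⟩ ≠ vertEquiv n ⟨e, he⟩ :=
        (vertEquiv_ne_iff hd he).mpr hde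
      have hreach : (essentialIdealGraph (ZMod n)).Reachable
          (vertEquiv n ⟨d, hd⟩) (vertEquiv n ⟨e, he⟩) :=
        ⟨SimpleGraph.Walk.cons a1 a2.toWalk⟩
      have hpos := hreach.pos_dist_of_ne hner
      have hne1 : (essentialIdealGraph (ZMod n)).dist
          (vertEquiv n ⟨d, hd⟩) (vertEquiv n ⟨e, he⟩) ≠ 1 := by
        intro h
        have := (adj_iff hp hq hne hm₁ hm₂ hn hd he).mp
          (SimpleGraph.dist_eq_one_iff_adj.mp h)
        tauto
      have h2 : (essentialIdealGraph (ZMod n)).dist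
          (vertEquiv n ⟨d, hd⟩) (vertEquiv n ⟨e, he⟩) = 2 := by omega
      rw [h2]
      rw [if_neg hde, if_neg (by tauto :
        ¬(d ≠ e ∧ ¬(p ^ m₁ ∣ d ∧ p ^ m₁ ∣ e) ∧ ¬(q ^ m₂ ∣ d ∧ q ^ m₂ ∣ e)))]
      norm_num

lemma sum_sum_ite_ne (s : Finset ℕ) :
    ∑ d ∈ s, ∑ e ∈ s, (if d ≠ e then (1:ℚ) else 0) = (s.card : ℚ) ^ 2 - s.card := by
  have h : ∀ d ∈ s, ∑ e ∈ s, (if d ≠ e then (1:ℚ) else 0) = (s.card : ℚ) - 1 := by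
    intro d hd
    have h1 : ∀ e ∈ s, (if d ≠ e then (1:ℚ) else 0) = 1 - (if d = e then 1 else 0) := by
      intro e _
      by_cases h : d = e <;> simp [h]
    rw [Finset.sum_congr rfl h1, Finset.sum_sub_distrib, Finset.sum_const,
      Finset.sum_ite_eq s d (fun _ => (1:ℚ)), if_pos hd]
    simp
  rw [Finset.sum_congr rfl h, Finset.sum_const, nsmul_eq_mul]
  ring

lemma card_Dn (hp : p.Prime) (hq : q.Prime) (hne : p ≠ q)
    (hm₁ : 0 < m₁) (hm₂ : 0 < m₂) (hn : n = p ^ m₁ * q ^ m₂) :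
    (Dn n).card = (m₁ + 1) * (m₂ + 1) - 2 := by
  have hn0 : n ≠ 0 := NeZero.ne n
  have cop : (p ^ m₁).Coprime (q ^ m₂) :=
    Nat.Coprime.pow _ _ ((Nat.coprime_primes hp hq).mpr hne)
  have hcard : n.divisors.card = (m₁ + 1) * (m₂ + 1) := by
    rw [hn, cop.card_divisors_mul, Nat.divisors_prime_pow hp, Nat.divisors_prime_pow hq]
    simp
  have hpdvd : p ∣ n := (dvd_pow_self p hm₁.ne').trans (hn ▸ dvd_mul_right _ _)
  have hn1 : n ≠ 1 := fun h => hp.one_lt.ne' (Nat.dvd_one.mp (h ▸ hpdvd))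
  have h1 : (1 : ℕ) ∈ n.divisors := Nat.one_mem_divisors.mpr hn0
  have h2 : n ∈ n.divisors.erase 1 :=
    Finset.mem_erase.mpr ⟨hn1, Nat.mem_divisors_self n hn0⟩
  rw [Dn, Finset.card_erase_of_mem h2, Finset.card_erase_of_mem h1, hcard]
  omega

lemma card_filter_aux {a b n : ℕ} [NeZero n] (ha1 : 1 < a) (hb0 : b ≠ 0)
    (hn : n = a * b) :
    ((Dn n).filter (fun d => a ∣ d)).card = b.properDivisors.card := by
  have hn0 : n ≠ 0 := NeZero.ne n
  have ha0 : 0 < a := by omega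
  refine Finset.card_bij' (fun d _ => d / a) (fun t _ => a * t) ?_ ?_ ?_ ?_
  · intro d hd
    obtain ⟨hdDn, hPd⟩ := Finset.mem_filter.mp hd
    have hd' := (mem_Dn hn0).mp hdDn
    obtain ⟨t, rfl⟩ := hPd
    show a * t / a ∈ b.properDivisors
    rw [Nat.mul_div_cancel_left t ha0]
    have htb : t ∣ b := by
      have := hd'.1
      rw [hn] at this
      exact (Nat.mul_dvd_mul_iff_left ha0).mp this
    have htne : t ≠ b := fun h => hd'.2.2 (by rw [h, ← hn])
    exact Nat.mem_properDivisors.mpr ⟨htb,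
      lt_of_le_of_ne (Nat.le_of_dvd (Nat.pos_of_ne_zero hb0) htb) htne⟩
  · intro t ht
    obtain ⟨htb, htlt⟩ := Nat.mem_properDivisors.mp ht
    refine Finset.mem_filter.mpr ⟨(mem_Dn hn0).mpr ⟨?_, ?_, ?_⟩, dvd_mul_right _ _⟩
    · rw [hn]
      exact mul_dvd_mul_left a htb
    · intro h
      have : a ≤ 1 := Nat.le_of_dvd one_pos ⟨t, h.symm⟩
      omega
    · intro h
      rw [hn] at h
      exact htlt.ne (Nat.eq_of_mul_eq_mul_left ha0 h)
  · intro d hd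
    exact Nat.mul_div_cancel' (Finset.mem_filter.mp hd).2
  · intro t _
    exact Nat.mul_div_cancel_left t ha0

lemma card_properDivisors_prime_pow {r k : ℕ} (hr : r.Prime) :
    (r ^ k).properDivisors.card = k := by
  have h0 : r ^ k ≠ 0 := (pow_pos hr.pos _).ne'
  have h1 : (r ^ k).divisors.card = k + 1 := by
    rw [Nat.divisors_prime_pow hr]; simp
  have h2 := Nat.insert_self_properDivisors h0 (n := r ^ k)
  have h3 : (r ^ k) ∉ (r ^ k).properDivisors := Nat.self_notMem_properDivisors
  rw [← h2, Finset.card_insert_of_notMem h3] at h1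
  omega

lemma card_filter_P (hp : p.Prime) (hq : q.Prime) (hne : p ≠ q)
    (hm₁ : 0 < m₁) (hm₂ : 0 < m₂) (hn : n = p ^ m₁ * q ^ m₂) :
    ((Dn n).filter (fun d => p ^ m₁ ∣ d)).card = m₂ := by
  rw [card_filter_aux (Nat.one_lt_pow hm₁.ne' hp.one_lt) (pow_pos hq.pos _).ne' hn]
  exact card_properDivisors_prime_pow hq

lemma card_filter_Q (hp : p.Prime) (hq : q.Prime) (hne : p ≠ q)
    (hm₁ : 0 < m₁) (hm₂ : 0 < m₂) (hn : n = p ^ m₁ * q ^ m₂) :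
    ((Dn n).filter (fun d => q ^ m₂ ∣ d)).card = m₁ := by
  rw [card_filter_aux (Nat.one_lt_pow hm₂.ne' hq.one_lt) (pow_pos hp.pos _).ne'
    (by rw [hn, mul_comm])]
  exact card_properDivisors_prime_pow hp

/-- For `n = p ^ m₁ * q ^ m₂` with `p < q` primes and `m₁, m₂ ≥ 1`, the Wiener index of
the essential ideal graph of `ZMod n` equals
`(1/2)[m₁m₂(m₁m₂ - 1) + (m₁ + m₂)(2m₁m₂ - 4) + 2(1 + m₁² + m₂²)]`. -/
theorem wiener_essentialIdealGraph_two_primePows (p q m₁ m₂ n : ℕ)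
    (hp : p.Prime) (hq : q.Prime) (hpq : p < q)
    (hm₁ : 0 < m₁) (hm₂ : 0 < m₂) (hn : n = p ^ m₁ * q ^ m₂) [NeZero n] :
    essWiener n =
      ((m₁ : ℚ) * m₂ * ((m₁ : ℚ) * m₂ - 1) +
        ((m₁ : ℚ) + m₂) * (2 * (m₁ : ℚ) * m₂ - 4) +
        2 * (1 + (m₁ : ℚ) ^ 2 + (m₂ : ℚ) ^ 2)) / 2 := by
  classical
  have hne : p ≠ q := hpq.ne
  have hn0 : n ≠ 0 := NeZero.ne n
  have cop : (p ^ m₁).Coprime (q ^ m₂) :=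
    Nat.Coprime.pow _ _ ((Nat.coprime_primes hp hq).mpr hne)
  have excl : ∀ c : ℕ, c ∈ Dn n → ¬(p ^ m₁ ∣ c ∧ q ^ m₂ ∣ c) := by
    rintro c hc ⟨h1, h2⟩
    have hc' := (mem_Dn hn0).mp hc
    exact hc'.2.2 (Nat.dvd_antisymm hc'.1
      ((dvd_of_eq hn).trans (cop.mul_dvd_of_dvd_of_dvd h1 h2)))
  set G := essentialIdealGraph (ZMod n) with hG
  set F : ℕ → ℕ → ℚ := fun d e =>
    2 - (if d = e then (2:ℚ) else 0) -
      (if d ≠ e ∧ ¬(p ^ m₁ ∣ d ∧ p ^ m₁ ∣ e) ∧ ¬(q ^ m₂ ∣ d ∧ q ^ m₂ ∣ e)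
        then (1:ℚ) else 0) with hF
  have key : ∀ (dd ee : {x // x ∈ Dn n}),
      ((G.dist (vertEquiv n dd) (vertEquiv n ee) : ℕ) : ℚ) = F dd.1 ee.1 := by
    rintro ⟨d, hd⟩ ⟨e, he⟩
    exact dist_eq hp hq hne hm₁ hm₂ hn hd he
  have h1 : (∑ u : EssVert n, ∑ v : EssVert n, ((G.dist u v : ℕ) : ℚ)) =
      ∑ d ∈ Dn n, ∑ e ∈ Dn n, F d e := by
    rw [← Equiv.sum_comp (vertEquiv n) (fun u => ∑ v : EssVert n, ((G.dist u v : ℕ) : ℚ))]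
    calc ∑ dd : {x // x ∈ Dn n}, ∑ v : EssVert n, ((G.dist (vertEquiv n dd) v : ℕ) : ℚ)
        = ∑ dd : {x // x ∈ Dn n}, ∑ ee : {x // x ∈ Dn n}, F dd.1 ee.1 := by
          refine Fintype.sum_congr _ _ fun dd => ?_
          rw [← Equiv.sum_comp (vertEquiv n)
            (fun v => ((G.dist (vertEquiv n dd) v : ℕ) : ℚ))]
          exact Fintype.sum_congr _ _ fun ee => key dd ee
      _ = ∑ dd : {x // x ∈ Dn n}, ∑ e ∈ Dn n, F dd.1 e := by
          refine Fintype.sum_congr _ _ fun dd => ?_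
          exact Finset.sum_coe_sort (Dn n) (F dd.1)
      _ = ∑ d ∈ Dn n, ∑ e ∈ Dn n, F d e :=
          Finset.sum_coe_sort (Dn n) (fun d => ∑ e ∈ Dn n, F d e)
  -- cardinalities
  set N : ℚ := ((Dn n).card : ℚ) with hNdef
  have hNQ : N = ((m₁ : ℚ) + 1) * ((m₂ : ℚ) + 1) - 2 := by
    rw [hNdef, card_Dn hp hq hne hm₁ hm₂ hn]
    have h2le : (2:ℕ) ≤ (m₁ + 1) * (m₂ + 1) :=
      le_trans (by norm_num) (Nat.mul_le_mul (Nat.succ_le_succ hm₁) (Nat.succ_le_succ hm₂))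
    push_cast [Nat.cast_sub h2le]
    ring
  -- the three component sums
  have S0 : ∑ d ∈ Dn n, ∑ e ∈ Dn n, (2:ℚ) = 2 * N ^ 2 := by
    simp [Finset.sum_const, nsmul_eq_mul, hNdef]
    ring
  have S1 : ∑ d ∈ Dn n, ∑ e ∈ Dn n, (if d = e then (2:ℚ) else 0) = 2 * N := by
    have h : ∀ d ∈ Dn n, ∑ e ∈ Dn n, (if d = e then (2:ℚ) else 0) = 2 := by
      intro d hd
      rw [Finset.sum_ite_eq (Dn n) d (fun _ => (2:ℚ)), if_pos hd]
    rw [Finset.sum_congr rfl h, Finset.sum_const, nsmul_eq_mul]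
    ring
  have pointB : ∀ d ∈ Dn n, ∀ e ∈ Dn n,
      (if d ≠ e ∧ ¬(p ^ m₁ ∣ d ∧ p ^ m₁ ∣ e) ∧ ¬(q ^ m₂ ∣ d ∧ q ^ m₂ ∣ e)
        then (1:ℚ) else 0)
      = (if d ≠ e then (1:ℚ) else 0)
        - (if p ^ m₁ ∣ d ∧ p ^ m₁ ∣ e ∧ d ≠ e then (1:ℚ) else 0)
        - (if q ^ m₂ ∣ d ∧ q ^ m₂ ∣ e ∧ d ≠ e then (1:ℚ) else 0) := by
    intro d hd e he
    have hd2 := excl d hd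
    by_cases h1 : d = e
    · simp [h1]
    · by_cases h2 : p ^ m₁ ∣ d ∧ p ^ m₁ ∣ e
      · have h3 : ¬(q ^ m₂ ∣ d ∧ q ^ m₂ ∣ e) := fun h => hd2 ⟨h2.1, h.1⟩
        simp [h1, h2, h3]
      · by_cases h3 : q ^ m₂ ∣ d ∧ q ^ m₂ ∣ e
        · simp [h1, h2, h3]
        · simp [h1, h2, h3]
  set DP : Finset ℕ := (Dn n).filter (fun d => p ^ m₁ ∣ d) with hDP
  set DQ : Finset ℕ := (Dn n).filter (fun d => q ^ m₂ ∣ d) with hDQ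
  have hPsum : ∑ d ∈ DP, ∑ e ∈ DP, (if d ≠ e then (1:ℚ) else 0)
      = ∑ d ∈ Dn n, ∑ e ∈ Dn n,
          (if p ^ m₁ ∣ d ∧ p ^ m₁ ∣ e ∧ d ≠ e then (1:ℚ) else 0) := by
    rw [hDP, Finset.sum_filter]
    refine Finset.sum_congr rfl fun d hd => ?_
    by_cases hPd : p ^ m₁ ∣ d
    · rw [if_pos hPd, Finset.sum_filter]
      refine Finset.sum_congr rfl fun e he => ?_
      by_cases hPe : p ^ m₁ ∣ e <;> by_cases hde : d = e <;> simp [hPd, hPe, hde]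
    · rw [if_neg hPd]
      exact (Finset.sum_eq_zero fun e he => by simp [hPd]).symm
  have hQsum : ∑ d ∈ DQ, ∑ e ∈ DQ, (if d ≠ e then (1:ℚ) else 0)
      = ∑ d ∈ Dn n, ∑ e ∈ Dn n,
          (if q ^ m₂ ∣ d ∧ q ^ m₂ ∣ e ∧ d ≠ e then (1:ℚ) else 0) := by
    rw [hDQ, Finset.sum_filter]
    refine Finset.sum_congr rfl fun d hd => ?_
    by_cases hQd : q ^ m₂ ∣ d
    · rw [if_pos hQd, Finset.sum_filter]
      refine Finset.sum_congr rfl fun e he => ?_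
      by_cases hQe : q ^ m₂ ∣ e <;> by_cases hde : d = e <;> simp [hQd, hQe, hde]
    · rw [if_neg hQd]
      exact (Finset.sum_eq_zero fun e he => by simp [hQd]).symm
  have hcP : (DP.card : ℚ) = m₂ := by rw [hDP, card_filter_P hp hq hne hm₁ hm₂ hn]
  have hcQ : (DQ.card : ℚ) = m₁ := by rw [hDQ, card_filter_Q hp hq hne hm₁ hm₂ hn]
  have S2 : ∑ d ∈ Dn n, ∑ e ∈ Dn n,
      (if d ≠ e ∧ ¬(p ^ m₁ ∣ d ∧ p ^ m₁ ∣ e) ∧ ¬(q ^ m₂ ∣ d ∧ q ^ m₂ ∣ e)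
        then (1:ℚ) else 0)
      = (N ^ 2 - N) - ((m₂ : ℚ) ^ 2 - m₂) - ((m₁ : ℚ) ^ 2 - m₁) := by
    rw [Finset.sum_congr rfl (fun d hd => Finset.sum_congr rfl (fun e he => pointB d hd e he))]
    simp only [Finset.sum_sub_distrib]
    rw [← hPsum, ← hQsum, sum_sum_ite_ne, sum_sum_ite_ne, sum_sum_ite_ne, hcP, hcQ, ← hNdef]
  have hsplit : ∑ d ∈ Dn n, ∑ e ∈ Dn n, F d e =
      2 * N ^ 2 - 2 * N - ((N ^ 2 - N) - ((m₂ : ℚ) ^ 2 - m₂) - ((m₁ : ℚ) ^ 2 - m₁)) := by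
    rw [hF]
    simp only [Finset.sum_sub_distrib]
    rw [S0, S1, S2]
  rw [show essWiener n =
      (∑ u : EssVert n, ∑ v : EssVert n, ((G.dist u v : ℕ) : ℚ)) / 2 from rfl]
  rw [h1, hsplit, hNQ]
  push_cast
  ring

end Main
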